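/- arXiv:1601.05778 — 4 statements merged into one kernel-verified Lean document; each statement's English description precedes it below -/
import Mathlib

section
/- Let $r_1, \ldots, r_l$ be complex numbers with positive real parts. Then there exist complex numbers $\rho_1, \ldots, \rho_\tau$ with positive real parts that are linearly independent over $\mathbb{Z}$, such that the additive semigroup generated by $r_1, \ldots, r_l$ is contained in the additive semigroup generated by $\rho_1, \ldots, \rho_\tau$. -/
/-!
Induct on the generators, keeping a `ℚ`-linearly independent family `e` with positive real parts
whose `ℚ≥0`-span contains the generators seen so far. A generator outside the `ℚ`-span of `e` is
adjoined to `e`. Otherwise it is `P - B` with `P = ∑ c j • e j`, `B = ∑ β j • e j`, and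
`Re B < Re P`; then `e j - s j • B` is again a good family, for rational weights `s j ≥ 0` with
`s j * Re B < Re (e j)` and `∑ β j * s j < 1 ≤ ∑ c j * s j`, and its `ℚ≥0`-span contains `B`,
every `e j` and `P - B`. Finally, clearing denominators turns the `ℚ≥0`-span of `e` into the
`ℕ`-span of `e / D`, and the nonzero elements of the `ℕ`-span of numbers with positive real part
are exactly the semigroup they generate.
-/
/-- The additive semigroup generated by a finite family of complex numbers:
all linear combinations with nonnegative integer coefficients, not all zero. -/
def addSemigroupGen {n : ℕ} (v : Fin n → ℂ) : Set ℂ :=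
  {x | ∃ m : Fin n → ℕ, 0 < ∑ i, m i ∧ x = ∑ i, (m i : ℂ) * v i}

open Submodule Set

theorem LinearIndependent.sub_smul_sum_smul {ι K V : Type*} [Fintype ι] [Field K]
    [AddCommGroup V] [Module K V] {e : ι → V} (he : LinearIndependent K e) (s β : ι → K)
    (hsβ : ∑ k, β k * s k ≠ 1) :
    LinearIndependent K fun j => e j - s j • ∑ k, β k • e k := by
  rw [Fintype.linearIndependent_iff] at he ⊢
  intro a ha
  set c := ∑ j, a j * s j
  have hcoef : ∀ j, a j - c * β j = 0 := by
    refine he _ (ha ▸ ?_)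
    simp only [smul_sub, sub_smul, Finset.sum_sub_distrib]
    congr 1
    calc ∑ j, (c * β j) • e j = c • ∑ k, β k • e k := by simp only [mul_smul, Finset.smul_sum]
      _ = ∑ j, a j • s j • ∑ k, β k • e k := by simp only [c, Finset.sum_smul, mul_smul]
  have hc : c = 0 := by
    have h : c * (1 - ∑ k, β k * s k) = 0 := by
      rw [mul_sub, mul_one, Finset.mul_sum, sub_eq_zero]
      exact Finset.sum_congr rfl fun j _ => by rw [← mul_assoc, ← sub_eq_zero.1 (hcoef j)]
    exact (mul_eq_zero.1 h).resolve_right (sub_ne_zero.2 hsβ.symm)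
  intro j
  simpa [hc] using hcoef j

theorem exists_nsmul_mem_span_nat_of_mem_span_nnrat {V : Type*} [AddCommMonoid V]
    [Module ℚ≥0 V] {S : Set V} {x : V} (hx : x ∈ span ℚ≥0 S) :
    ∃ D : ℕ, 0 < D ∧ D • x ∈ span ℕ S := by
  induction hx using span_induction with
  | mem x hx => exact ⟨1, one_pos, by simpa using subset_span hx⟩
  | zero => exact ⟨1, one_pos, by simp⟩
  | add x y _ _ hx hy =>
    obtain ⟨D₁, hD₁, hx⟩ := hx
    obtain ⟨D₂, hD₂, hy⟩ := hy
    refine ⟨D₁ * D₂, mul_pos hD₁ hD₂, ?_⟩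
    rw [nsmul_add, mul_nsmul, mul_nsmul']
    exact add_mem (nsmul_mem hx _) (nsmul_mem hy _)
  | smul a x _ hx =>
    obtain ⟨D, hD, hx⟩ := hx
    refine ⟨a.den * D, mul_pos a.den_pos hD, ?_⟩
    have : a.den • a • x = a.num • x := by
      rw [← Nat.cast_smul_eq_nsmul ℚ≥0, smul_smul, NNRat.den_mul_eq_num, Nat.cast_smul_eq_nsmul]
    rw [mul_nsmul, this, smul_comm]
    exact nsmul_mem hx _

theorem exists_nsmul_mem_span_nat_of_forall_mem_span_nnrat {ι V : Type*} [Fintype ι]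
    [AddCommMonoid V] [Module ℚ≥0 V] {S : Set V} {r : ι → V} (hr : ∀ i, r i ∈ span ℚ≥0 S) :
    ∃ D : ℕ, 0 < D ∧ ∀ i, D • r i ∈ span ℕ S := by
  choose D hD hDr using fun i => exists_nsmul_mem_span_nat_of_mem_span_nnrat (hr i)
  refine ⟨∏ i, D i, Finset.prod_pos fun i _ => hD i, fun i => ?_⟩
  obtain ⟨k, hk⟩ := Finset.dvd_prod_of_mem D (Finset.mem_univ i)
  rw [hk, mul_nsmul]
  exact nsmul_mem (hDr i) k

theorem exists_nnrat_weights_of_sum_mul_lt {ι : Type*} [Fintype ι] {w : ι → ℝ}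
    (hw : ∀ j, 0 < w j) {c β : ι → ℚ≥0} (h : ∑ j, (β j : ℝ) * w j < ∑ j, (c j : ℝ) * w j) :
    ∃ s : ι → ℚ≥0, (∀ j, s j * ∑ k, (β k : ℝ) * w k < w j) ∧
      ∑ j, β j * s j < 1 ∧ 1 ≤ ∑ j, c j * s j := by
  set b := ∑ j, (β j : ℝ) * w j
  set S := ∑ j, (c j : ℝ) * w j
  have hb : 0 ≤ b := Finset.sum_nonneg fun j _ => mul_nonneg (β j).cast_nonneg (hw j).le
  obtain ⟨m, hbm, hmS⟩ := exists_between h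
  have hm : 0 < m := hb.trans_lt hbm
  have hS : 0 < S := hm.trans hmS
  have hs : ∀ j, ∃ s : ℚ≥0, w j / S < s ∧ (s : ℝ) < w j / m := fun j => by
    obtain ⟨q, hq₁, hq₂⟩ := exists_rat_btwn (div_lt_div_of_pos_left (hw j) hm hmS)
    have hq : 0 ≤ q := by exact_mod_cast (div_pos (hw j) hS).le.trans hq₁.le
    exact ⟨⟨q, hq⟩, by simpa using hq₁, by simpa using hq₂⟩
  choose s hsS hsm using hs
  have hsm' : ∀ j, (s j : ℝ) * m < w j := fun j => (lt_div_iff₀ hm).1 (hsm j)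
  have hsS' : ∀ j, w j < s j * S := fun j => (div_lt_iff₀ hS).1 (hsS j)
  refine ⟨s, fun j => ?_, ?_, ?_⟩
  · exact (mul_le_mul_of_nonneg_left hbm.le (s j).cast_nonneg).trans_lt (hsm' j)
  · suffices ((∑ j, β j * s j : ℚ≥0) : ℝ) * m < 1 * m by
      exact_mod_cast lt_of_mul_lt_mul_right this hm.le
    calc ((∑ j, β j * s j : ℚ≥0) : ℝ) * m = ∑ j, (β j : ℝ) * (s j * m) := by
          push_cast; rw [Finset.sum_mul]; exact Finset.sum_congr rfl fun j _ => by ring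
      _ ≤ b :=
          Finset.sum_le_sum fun j _ => mul_le_mul_of_nonneg_left (hsm' j).le (β j).cast_nonneg
      _ < 1 * m := by rwa [one_mul]
  · suffices 1 * S ≤ ((∑ j, c j * s j : ℚ≥0) : ℝ) * S by
      exact_mod_cast le_of_mul_le_mul_right this hS
    calc 1 * S = S := one_mul S
      _ ≤ ∑ j, (c j : ℝ) * (s j * S) :=
          Finset.sum_le_sum fun j _ => mul_le_mul_of_nonneg_left (hsS' j).le (c j).cast_nonneg
      _ = ((∑ j, c j * s j : ℚ≥0) : ℝ) * S := by
          push_cast; rw [Finset.sum_mul]; exact Finset.sum_congr rfl fun j _ => by ring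

theorem Complex.re_sum_nnrat_smul {ι : Type*} [Fintype ι] (c : ι → ℚ≥0) (v : ι → ℂ) :
    (∑ j, c j • v j).re = ∑ j, (c j : ℝ) * (v j).re := by
  simp [Complex.re_sum, NNRat.smul_def]

theorem exists_nnrat_sub_eq_of_mem_span_rat {ι : Type*} [Fintype ι] {v : ι → ℂ} {x : ℂ}
    (hx : x ∈ span ℚ (range v)) :
    ∃ c β : ι → ℚ≥0, x = ∑ j, c j • v j - ∑ j, β j • v j := by
  obtain ⟨γ, rfl⟩ := (mem_span_range_iff_exists_fun ℚ).1 hx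
  refine ⟨fun j => (γ j).toNNRat, fun j => (-γ j).toNNRat, ?_⟩
  rw [← Finset.sum_sub_distrib]
  refine Finset.sum_congr rfl fun j _ => ?_
  rw [← NNRat.cast_smul_eq_nnqsmul ℚ, ← NNRat.cast_smul_eq_nnqsmul ℚ, ← sub_smul]
  congr
  exact (max_zero_sub_max_neg_zero_eq_self (γ j)).symm

theorem exists_insert_subset_span_nnrat_of_mem_span {ι : Type*} [Fintype ι] {e : ι → ℂ}
    (he : ∀ j, 0 < (e j).re) (hind : LinearIndependent ℚ e) {x : ℂ}
    (hx : x ∈ span ℚ (range e)) (hxre : 0 < x.re) :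
    ∃ e' : ι → ℂ, (∀ j, 0 < (e' j).re) ∧ LinearIndependent ℚ e' ∧
      insert x (range e) ⊆ span ℚ≥0 (range e') := by
  obtain ⟨c, β, rfl⟩ := exists_nnrat_sub_eq_of_mem_span_rat hx
  set B := ∑ j, β j • e j
  have hBre : B.re = ∑ j, (β j : ℝ) * (e j).re := Complex.re_sum_nnrat_smul β e
  rw [Complex.sub_re, Complex.re_sum_nnrat_smul, hBre, sub_pos] at hxre
  obtain ⟨s, hsre, hβs, hcs⟩ := exists_nnrat_weights_of_sum_mul_lt he hxre
  set e' := fun j => e j - s j • B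
  have hsum : ∀ a : ι → ℚ≥0, ∑ j, a j • e j = ∑ j, a j • e' j + (∑ j, a j * s j) • B := by
    intro a
    simp only [e', smul_sub, Finset.sum_sub_distrib, Finset.sum_smul, mul_smul]
    abel
  have hB : B ∈ span ℚ≥0 (range e') := by
    have : (1 - ∑ j, β j * s j) • B = ∑ j, β j • e' j := by
      have h : (1 - ∑ j, β j * s j) • B + (∑ j, β j * s j) • B = B := by
        rw [← add_smul, tsub_add_cancel_of_le hβs.le, one_smul]
      exact add_right_cancel (h.trans (hsum β))
    rw [← smul_mem_iff _ (tsub_pos_of_lt hβs).ne', this]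
    exact sum_mem fun j _ => smul_mem _ _ (subset_span (mem_range_self j))
  refine ⟨e', fun j => ?_, ?_, ?_⟩
  · rw [Complex.sub_re, Complex.smul_re, NNRat.smul_def, sub_pos, hBre]
    exact hsre j
  · have hβs' : ∑ j, (β j : ℚ) * (s j : ℚ) ≠ 1 := by exact_mod_cast hβs.ne
    have he' : e' = fun j => e j - (s j : ℚ) • ∑ k, (β k : ℚ) • e k := by
      simp only [NNRat.cast_smul_eq_nnqsmul]; rfl
    exact he' ▸ hind.sub_smul_sum_smul (fun j => (s j : ℚ)) (fun j => (β j : ℚ)) hβs'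
  · rw [insert_subset_iff, range_subset_iff]
    refine ⟨?_, fun j => ?_⟩
    · have h : (∑ j, c j * s j) • B = (∑ j, c j * s j - 1) • B + B := by
        nth_rw 1 [← tsub_add_cancel_of_le hcs]
        rw [add_smul, one_smul]
      rw [hsum c, h, ← add_assoc, add_sub_cancel_right]
      exact add_mem (sum_mem fun j _ => smul_mem _ _ (subset_span (mem_range_self j)))
        (smul_mem _ _ hB)
    · rw [show e j = e' j + s j • B by simp [e']]
      exact add_mem (subset_span (mem_range_self j)) (smul_mem _ _ hB)

theorem exists_insert_subset_span_nnrat {τ : ℕ} {e : Fin τ → ℂ} (he : ∀ j, 0 < (e j).re)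
    (hind : LinearIndependent ℚ e) {x : ℂ} (hxre : 0 < x.re) :
    ∃ (τ' : ℕ) (e' : Fin τ' → ℂ), (∀ j, 0 < (e' j).re) ∧ LinearIndependent ℚ e' ∧
      insert x (range e) ⊆ span ℚ≥0 (range e') := by
  by_cases hx : x ∈ span ℚ (range e)
  · exact ⟨τ, exists_insert_subset_span_nnrat_of_mem_span he hind hx hxre⟩
  · refine ⟨τ + 1, Fin.cons x e, Fin.cons hxre he, linearIndependent_finCons.2 ⟨hind, hx⟩, ?_⟩
    rw [Fin.range_cons]
    exact subset_span

theorem exists_subset_span_nnrat (s : Finset ℂ) (hs : ∀ x ∈ s, 0 < x.re) :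
    ∃ (τ : ℕ) (q : Fin τ → ℂ), (∀ j, 0 < (q j).re) ∧ LinearIndependent ℚ q ∧
      (s : Set ℂ) ⊆ span ℚ≥0 (range q) := by
  induction s using Finset.induction_on with
  | empty => exact ⟨0, Fin.elim0, fun j => j.elim0, linearIndependent_empty_type, by simp⟩
  | insert x s _ ih =>
    obtain ⟨τ, q, hq, hind, hsq⟩ := ih fun y hy => hs y (Finset.mem_insert_of_mem hy)
    obtain ⟨τ', q', hq', hind', hsub⟩ :=
      exists_insert_subset_span_nnrat hq hind (hs x (Finset.mem_insert_self x s))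
    refine ⟨τ', q', hq', hind', ?_⟩
    rw [Finset.coe_insert]
    exact insert_subset (hsub (mem_insert x _))
      (hsq.trans (span_le.2 fun y hy => hsub (mem_insert_of_mem x hy)))

theorem mem_span_nat_inv_mul_of_nsmul_mem {ι : Type*} {q : ι → ℂ} {D : ℕ} (hD : D ≠ 0) {x : ℂ}
    (hx : D • x ∈ span ℕ (range q)) : x ∈ span ℕ (range fun j => (D : ℂ)⁻¹ * q j) := by
  have := mem_map_of_mem (f := LinearMap.mulLeft ℕ (D : ℂ)⁻¹) hx
  rwa [map_span, ← range_comp, LinearMap.mulLeft_apply, nsmul_eq_mul,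
    inv_mul_cancel_left₀ (Nat.cast_ne_zero.2 hD)] at this

theorem addSemigroupGen_eq_span_nat_diff_zero {n : ℕ} {v : Fin n → ℂ}
    (hv : ∀ i, 0 < (v i).re) : addSemigroupGen v = (span ℕ (range v) : Set ℂ) \ {0} := by
  ext x
  constructor
  · rintro ⟨m, hm, rfl⟩
    refine ⟨(mem_span_range_iff_exists_fun ℕ).2 ⟨m, by simp [nsmul_eq_mul]⟩, fun h0 => ?_⟩
    obtain ⟨i, -, hi⟩ := Finset.exists_ne_zero_of_sum_ne_zero hm.ne'
    have hre : 0 < (∑ i, (m i : ℂ) * v i).re := by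
      simp only [Complex.re_sum, Complex.mul_re, Complex.natCast_re, Complex.natCast_im, zero_mul,
        sub_zero]
      exact Finset.sum_pos' (fun j _ => mul_nonneg (Nat.cast_nonneg _) (hv j).le)
        ⟨i, Finset.mem_univ i, mul_pos (Nat.cast_pos.2 (Nat.pos_of_ne_zero hi)) (hv i)⟩
    simp_all
  · rintro ⟨hx, hx0⟩
    obtain ⟨m, rfl⟩ := (mem_span_range_iff_exists_fun ℕ).1 hx
    refine ⟨m, Nat.pos_of_ne_zero fun hm => hx0 ?_, by simp [nsmul_eq_mul]⟩
    simp [Finset.sum_eq_zero_iff.1 hm]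

theorem stmt2 (l : ℕ) (r : Fin l → ℂ) (hr : ∀ i, 0 < (r i).re) :
    ∃ (τ : ℕ) (ρ : Fin τ → ℂ), (∀ i, 0 < (ρ i).re) ∧
      LinearIndependent ℤ ρ ∧
      addSemigroupGen r ⊆ addSemigroupGen ρ := by
  obtain ⟨τ, q, hq, hind, hrq⟩ :=
    exists_subset_span_nnrat (Finset.univ.image r) (by simpa using hr)
  obtain ⟨D, hD, hDr⟩ :=
    exists_nsmul_mem_span_nat_of_forall_mem_span_nnrat fun i => hrq (by simp : r i ∈ _)
  have hρ : ∀ j, 0 < ((D : ℂ)⁻¹ * q j).re := fun j => by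
    rw [← Complex.ofReal_natCast, ← Complex.ofReal_inv, Complex.re_ofReal_mul]
    exact mul_pos (by positivity) (hq j)
  refine ⟨τ, fun j => (D : ℂ)⁻¹ * q j, hρ, ?_, ?_⟩
  · refine (hind.map' (LinearMap.mulLeft ℚ (D : ℂ)⁻¹) ?_).restrict_scalars' ℤ
    exact LinearMap.ker_eq_bot.2 (mul_right_injective₀ (inv_ne_zero (Nat.cast_ne_zero.2 hD.ne')))
  · rw [addSemigroupGen_eq_span_nat_diff_zero hr, addSemigroupGen_eq_span_nat_diff_zero hρ]
    exact sdiff_subset_sdiff_left <| span_le.2 <| range_subset_iff.2 fun i =>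
      mem_span_nat_inv_mul_of_nsmul_mem hD.ne' (hDr i)
end

section
/- Let $G$ be the additive semigroup generated by two complex numbers $r_1, r_2$ with positive real parts, and fix $k > 0$. Then there is a constant $C > 0$ such that $|B(\tilde\gamma/k, (\gamma - \tilde\gamma)/k)| \leq C$ for all $\gamma, \tilde\gamma \in G$ with $\tilde\gamma < \gamma$ (componentwise in the $(m_1,m_2)$-coordinates). Equivalently, $1/|\Gamma(\gamma/k)| \leq C / |\Gamma(\tilde\gamma/k)\,\Gamma((\gamma - \tilde\gamma)/k)|$. -/
open MeasureTheory Set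

private lemma aux_min_le (e₁ e₂ : ℝ) (h₁ : 0 < e₁) (h₂ : 0 < e₂) (n₁ n₂ : ℕ)
    (h : ¬(n₁ = 0 ∧ n₂ = 0)) : min e₁ e₂ ≤ n₁ * e₁ + n₂ * e₂ := by
  rcases Nat.eq_zero_or_pos n₁ with h1 | h1
  · rcases Nat.eq_zero_or_pos n₂ with h2 | h2
    · exact absurd ⟨h1, h2⟩ h
    · have : (1:ℝ) ≤ n₂ := by exact_mod_cast h2
      have : e₂ ≤ n₂ * e₂ := le_mul_of_one_le_left h₂.le this
      have hp : (0:ℝ) ≤ n₁ * e₁ := by positivity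
      calc min e₁ e₂ ≤ e₂ := min_le_right _ _
        _ ≤ n₂ * e₂ := ‹_›
        _ ≤ n₁ * e₁ + n₂ * e₂ := by linarith
  · have : (1:ℝ) ≤ n₁ := by exact_mod_cast h1
    have : e₁ ≤ n₁ * e₁ := le_mul_of_one_le_left h₁.le this
    have hp : (0:ℝ) ≤ n₂ * e₂ := by positivity
    calc min e₁ e₂ ≤ e₁ := min_le_left _ _
      _ ≤ n₁ * e₁ := ‹_›
      _ ≤ n₁ * e₁ + n₂ * e₂ := by linarith

private lemma beta_bound {a : ℝ} (ha0 : 0 < a) {x y : ℂ}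
    (hx : a ≤ x.re) (hy : a ≤ y.re) :
    ‖Complex.betaIntegral x y‖ ≤
      ∫ t in (0:ℝ)..1, ‖(t:ℂ) ^ ((a:ℂ) - 1) * (1 - (t:ℂ)) ^ ((a:ℂ) - 1)‖ := by
  have hare : (0:ℝ) < ((a:ℂ)).re := by simpa using ha0
  have hgi : IntervalIntegrable
      (fun t : ℝ => ‖(t:ℂ) ^ ((a:ℂ) - 1) * (1 - (t:ℂ)) ^ ((a:ℂ) - 1)‖) volume 0 1 :=
    (Complex.betaIntegral_convergent hare hare).norm
  rw [Complex.betaIntegral]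
  have habs : |∫ t in (0:ℝ)..1, ‖(t:ℂ) ^ ((a:ℂ) - 1) * (1 - (t:ℂ)) ^ ((a:ℂ) - 1)‖|
      = ∫ t in (0:ℝ)..1, ‖(t:ℂ) ^ ((a:ℂ) - 1) * (1 - (t:ℂ)) ^ ((a:ℂ) - 1)‖ :=
    abs_of_nonneg (intervalIntegral.integral_nonneg zero_le_one fun _ _ => norm_nonneg _)
  rw [← habs]
  refine intervalIntegral.norm_integral_le_abs_of_norm_le ?_ hgi
  have hmem : ∀ᵐ t ∂(volume.restrict (Set.uIoc (0:ℝ) 1)), t ∈ Set.uIoc (0:ℝ) 1 :=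
    ae_restrict_mem measurableSet_uIoc
  have hne1 : ∀ᵐ t : ℝ, t ≠ 1 := by
    refine MeasureTheory.ae_iff.mpr ?_
    simp [Set.setOf_eq_eq_singleton]
  filter_upwards [hmem, ae_restrict_of_ae hne1] with t ht htne
  rw [Set.uIoc_of_le zero_le_one] at ht
  have ht0 : 0 < t := ht.1
  have ht1 : t < 1 := lt_of_le_of_ne ht.2 htne
  have h1t : 0 < 1 - t := by linarith
  have key : ∀ (z : ℂ) (s : ℝ), 0 < s → a ≤ z.re →
      ‖(s:ℂ) ^ (z - 1)‖ ≤ s ^ (a - 1) ∨ True := fun _ _ _ _ => Or.inr trivial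
  have e1 : ‖(t:ℂ) ^ (x - 1)‖ = t ^ (x.re - 1) := by
    rw [Complex.norm_cpow_eq_rpow_re_of_pos ht0]; simp
  have e2 : ‖(1 - (t:ℂ)) ^ (y - 1)‖ = (1 - t) ^ (y.re - 1) := by
    rw [show (1 - (t:ℂ)) = (((1 - t : ℝ)):ℂ) by push_cast; ring,
      Complex.norm_cpow_eq_rpow_re_of_pos h1t]; simp
  have e3 : ‖(t:ℂ) ^ ((a:ℂ) - 1)‖ = t ^ (a - 1) := by
    rw [Complex.norm_cpow_eq_rpow_re_of_pos ht0]; simp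
  have e4 : ‖(1 - (t:ℂ)) ^ ((a:ℂ) - 1)‖ = (1 - t) ^ (a - 1) := by
    rw [show (1 - (t:ℂ)) = (((1 - t : ℝ)):ℂ) by push_cast; ring,
      Complex.norm_cpow_eq_rpow_re_of_pos h1t]; simp
  simp only [norm_mul, e1, e2, e3, e4]
  have b1 : t ^ (x.re - 1) ≤ t ^ (a - 1) :=
    Real.rpow_le_rpow_of_exponent_ge ht0 ht1.le (by linarith)
  have b2 : (1 - t) ^ (y.re - 1) ≤ (1 - t) ^ (a - 1) :=
    Real.rpow_le_rpow_of_exponent_ge h1t (by linarith) (by linarith)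
  exact mul_le_mul b1 b2 (Real.rpow_nonneg h1t.le _) (Real.rpow_nonneg ht0.le _)

theorem stmt6 (r₁ r₂ : ℂ) (h₁ : 0 < r₁.re) (h₂ : 0 < r₂.re) (k : ℝ) (hk : 0 < k) :
    ∃ C > (0:ℝ), ∀ m l : ℕ × ℕ,
      l.1 ≤ m.1 → l.2 ≤ m.2 → l ≠ m → l ≠ 0 →
      ‖Complex.Gamma (((l.1 : ℂ) * r₁ + (l.2 : ℂ) * r₂) / k) *
          Complex.Gamma ((((m.1 - l.1 : ℕ) : ℂ) * r₁ + ((m.2 - l.2 : ℕ) : ℂ) * r₂) / k) /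
          Complex.Gamma (((m.1 : ℂ) * r₁ + (m.2 : ℂ) * r₂) / k)‖ ≤ C := by
  set a : ℝ := min (min r₁.re r₂.re / k) 1 with ha_def
  have ha0 : 0 < a := lt_min (div_pos (lt_min h₁ h₂) hk) one_pos
  have hare : (0:ℝ) < ((a:ℂ)).re := by simpa using ha0
  set C : ℝ := ∫ t in (0:ℝ)..1, ‖(t:ℂ) ^ ((a:ℂ) - 1) * (1 - (t:ℂ)) ^ ((a:ℂ) - 1)‖ with hC_def
  have hgi : IntervalIntegrable
      (fun t : ℝ => ‖(t:ℂ) ^ ((a:ℂ) - 1) * (1 - (t:ℂ)) ^ ((a:ℂ) - 1)‖) volume 0 1 :=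
    (Complex.betaIntegral_convergent hare hare).norm
  have hCpos : 0 < C := by
    refine intervalIntegral.intervalIntegral_pos_of_pos_on hgi ?_ one_pos
    intro t ht
    have ht0 := ht.1
    have h1t : 0 < 1 - t := by linarith [ht.2]
    have e3 : ‖(t:ℂ) ^ ((a:ℂ) - 1)‖ = t ^ (a - 1) := by
      rw [Complex.norm_cpow_eq_rpow_re_of_pos ht0]; simp
    have e4 : ‖(1 - (t:ℂ)) ^ ((a:ℂ) - 1)‖ = (1 - t) ^ (a - 1) := by
      rw [show (1 - (t:ℂ)) = (((1 - t : ℝ)):ℂ) by push_cast; ring,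
        Complex.norm_cpow_eq_rpow_re_of_pos h1t]; simp
    simp only [norm_mul, e3, e4]
    exact mul_pos (Real.rpow_pos_of_pos ht0 _) (Real.rpow_pos_of_pos h1t _)
  refine ⟨C, hCpos, ?_⟩
  intro m l hl1 hl2 hlm hl0
  set x : ℂ := ((l.1 : ℂ) * r₁ + (l.2 : ℂ) * r₂) / k with hx_def
  set y : ℂ := (((m.1 - l.1 : ℕ) : ℂ) * r₁ + ((m.2 - l.2 : ℕ) : ℂ) * r₂) / k with hy_def
  have hre : ∀ n₁ n₂ : ℕ, ¬(n₁ = 0 ∧ n₂ = 0) →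
      a ≤ (((n₁ : ℂ) * r₁ + (n₂ : ℂ) * r₂) / k).re := by
    intro n₁ n₂ hn
    have : (((n₁ : ℂ) * r₁ + (n₂ : ℂ) * r₂) / (k:ℂ)).re
        = (n₁ * r₁.re + n₂ * r₂.re) / k := by
      rw [Complex.div_ofReal_re]; simp
    rw [this]
    calc a ≤ min r₁.re r₂.re / k := min_le_left _ _
      _ ≤ (n₁ * r₁.re + n₂ * r₂.re) / k := by
        gcongr
        exact aux_min_le _ _ h₁ h₂ _ _ hn
  have hxre : a ≤ x.re := by
    apply hre
    intro ⟨e1, e2⟩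
    exact hl0 (Prod.ext e1 e2)
  have hyre : a ≤ y.re := by
    apply hre
    rintro ⟨e1, e2⟩
    exact hlm (Prod.ext (Nat.le_antisymm hl1 (Nat.sub_eq_zero_iff_le.mp e1))
      (Nat.le_antisymm hl2 (Nat.sub_eq_zero_iff_le.mp e2)))
  have hx0 : 0 < x.re := lt_of_lt_of_le ha0 hxre
  have hy0 : 0 < y.re := lt_of_lt_of_le ha0 hyre
  have hsum : x + y = ((m.1 : ℂ) * r₁ + (m.2 : ℂ) * r₂) / k := by
    rw [hx_def, hy_def, ← add_div]
    congr 1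
    push_cast [Nat.cast_sub hl1, Nat.cast_sub hl2]
    ring
  have hGne : Complex.Gamma (x + y) ≠ 0 := by
    apply Complex.Gamma_ne_zero
    intro n hn
    have h1 : (x + y).re ≤ 0 := by
      rw [hn]
      simp only [Complex.neg_re, Complex.natCast_re, neg_nonpos]
      positivity
    have h2 : 0 < (x + y).re := by rw [Complex.add_re]; linarith
    linarith
  have hbeta := Complex.Gamma_mul_Gamma_eq_betaIntegral hx0 hy0
  have heq : Complex.Gamma x * Complex.Gamma y / Complex.Gamma (x + y)
      = Complex.betaIntegral x y := by
    field_simp [hbeta]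
    exact hbeta
  rw [← hsum, heq]
  exact beta_bound ha0 hxre hyre
end

section
/- Let $G$ be the additive semigroup generated by $r_1, r_2 \in \mathbb{C}$ with positive real parts, linearly independent over $\mathbb{Z}$; fix $k > 0$, an integer $p \geq 0$, and $s_\mu \in \mathbb{C}$ with $\mathrm{Re}\,s_\mu \geq 0$. Define Banach spaces $H^j = \{\eta = \sum_{\gamma \in G} a_\gamma z_1^{m_1} z_2^{m_2} : \|\eta\|_j = \sum_\gamma |\gamma|^j |a_\gamma| / |\Gamma(\gamma/k)| < \infty\}$, and the diagonal operator $\Delta(\sum a_\gamma z_1^{m_1} z_2^{m_2}) = \sum \gamma a_\gamma z_1^{m_1} z_2^{m_2}$. Then for integers $i > p$ and nonnegative integers $l_1, l_2$ with $\mathrm{Re}(l_1 r_1 + l_2 r_2) \geq (i - p)k$, the operator $\eta \mapsto z_1^{l_1} z_2^{l_2} (\Delta + s_\mu)^i \eta$ is a continuous (bounded) linear operator from $H^p$ to $H^0$. -/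
/-!
Write `γ(m) = m₁ r₁ + m₂ r₂` and `L = γ(l₁, l₂)`, and put `n + 1 = i - p`. Multiplication by
`z₁^{l₁} z₂^{l₂}` moves the coefficient at `γ` to `γ + L`, so it suffices to bound the weight ratio
`|γ + sμ|^i |Γ(γ/k)| / |Γ((γ + L)/k)|` by `C |γ|^p` uniformly over nonzero `γ`.
From `Γ(z) Γ(c) = Γ(z + c) B(z, c)` and `|B(z, c)| ≤ B(Re z, n + 1) ≤ n! / (Re z)^{n+1}` for
`Re c ≥ n + 1`, we get `|Γ(z)| (Re z)^{n+1} ≤ n! |Γ(z + c)| / |Γ(c)|` with `z = γ/k`, `c = L/k`.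
Since `Re r₁, Re r₂ > 0`, the point `γ` stays in a sector, `|γ| ≤ K Re γ`, and `Re γ` is bounded
below away from `γ = 0`, which absorbs the extra factor `|γ|^{n+1}` and the shift `sμ`.
-/

open Complex MeasureTheory
open scoped Nat

namespace Complex

theorem betaIntegral_ofReal (x y : ℝ) :
    betaIntegral x y = ((∫ t in (0:ℝ)..1, t ^ (x - 1) * (1 - t) ^ (y - 1) : ℝ) : ℂ) := by
  rw [betaIntegral, ← intervalIntegral.integral_ofReal]
  refine intervalIntegral.integral_congr fun t ht => ?_
  rw [Set.uIcc_of_le zero_le_one] at ht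
  push_cast [ofReal_cpow ht.1, ofReal_cpow (sub_nonneg.2 ht.2)]
  rfl

theorem norm_betaIntegral_le {z c : ℂ} (hz : 0 < z.re) {m : ℕ} (hc : (m + 1 : ℝ) ≤ c.re) :
    ‖betaIntegral z c‖ ≤ m ! / z.re ^ (m + 1) := by
  set x := z.re
  have hbound : ∀ᵐ t ∂volume, t ∈ Set.Ioc (0:ℝ) 1 →
      ‖(t:ℂ) ^ (z - 1) * (1 - (t:ℂ)) ^ (c - 1)‖ ≤ t ^ (x - 1) * (1 - t) ^ m := by
    filter_upwards [Measure.ae_ne volume (1:ℝ)] with t ht1 ht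
    have hpos : 0 < 1 - t := sub_pos.2 (lt_of_le_of_ne ht.2 ht1)
    rw [norm_mul, norm_cpow_eq_rpow_re_of_pos ht.1, ← ofReal_one, ← ofReal_sub,
      norm_cpow_eq_rpow_re_of_pos hpos, ← Real.rpow_natCast]
    refine mul_le_mul_of_nonneg_left ?_ (Real.rpow_nonneg ht.1.le _)
    exact Real.rpow_le_rpow_of_exponent_ge hpos (by linarith [ht.1]) (by rw [sub_re, ofReal_one, one_re]; linarith)
  have hint : IntervalIntegrable (fun t : ℝ => t ^ (x - 1) * (1 - t) ^ m)
      volume 0 1 :=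
    (intervalIntegral.intervalIntegrable_rpow' (by linarith)).mul_continuousOn
      (by fun_prop)
  have hprod : x ^ (m + 1) ≤ ∏ j ∈ Finset.range (m + 1), (x + j) := by
    simpa using Finset.prod_le_prod (s := Finset.range (m + 1)) (fun _ _ => hz.le)
      (fun j _ => le_add_of_nonneg_right (Nat.cast_nonneg (α := ℝ) j))
  have heval : ∫ t in (0:ℝ)..1, t ^ (x - 1) * (1 - t) ^ m =
      m ! / ∏ j ∈ Finset.range (m + 1), (x + j) := by
    have := betaIntegral_eval_nat_add_one_right (u := x) hz m
    rw [show ((m : ℂ) + 1) = ((m + 1 : ℝ) : ℂ) by push_cast; rfl, betaIntegral_ofReal] at this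
    simp only [add_sub_cancel_right, Real.rpow_natCast] at this
    exact_mod_cast this
  calc ‖betaIntegral z c‖ ≤ ∫ t in (0:ℝ)..1, t ^ (x - 1) * (1 - t) ^ m :=
        intervalIntegral.norm_integral_le_of_norm_le zero_le_one hbound hint
    _ = m ! / ∏ j ∈ Finset.range (m + 1), (x + j) := heval
    _ ≤ m ! / x ^ (m + 1) := by gcongr

theorem norm_Gamma_mul_re_pow_le {z c : ℂ} (hz : 0 < z.re) {m : ℕ} (hc : (m + 1 : ℝ) ≤ c.re) :
    ‖Gamma z‖ * z.re ^ (m + 1) ≤ m ! / ‖Gamma c‖ * ‖Gamma (z + c)‖ := by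
  have hc₀ : 0 < c.re := by linarith
  have hΓc : 0 < ‖Gamma c‖ := norm_pos_iff.2 (Gamma_ne_zero_of_re_pos hc₀)
  have hβ := norm_betaIntegral_le hz hc
  rw [div_mul_eq_mul_div, le_div_iff₀ hΓc]
  calc ‖Gamma z‖ * z.re ^ (m + 1) * ‖Gamma c‖
      = ‖Gamma (z + c)‖ * (‖betaIntegral z c‖ * z.re ^ (m + 1)) := by
        rw [mul_right_comm, ← norm_mul, Gamma_mul_Gamma_eq_betaIntegral hz hc₀, norm_mul,
          mul_assoc]
    _ ≤ ‖Gamma (z + c)‖ * m ! := by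
        gcongr
        rwa [le_div_iff₀ (by positivity)] at hβ
    _ = m ! * ‖Gamma (z + c)‖ := mul_comm _ _

end Complex

theorem norm_add_le_mul_norm {w s : ℂ} {ρ : ℝ} (hρ : 0 < ρ) (hw : ρ ≤ ‖w‖) :
    ‖w + s‖ ≤ (1 + ‖s‖ / ρ) * ‖w‖ := by
  have : ‖s‖ ≤ ‖s‖ / ρ * ‖w‖ := by
    rw [div_mul_eq_mul_div, le_div_iff₀ hρ]
    exact mul_le_mul_of_nonneg_left hw (norm_nonneg s)
  linarith [norm_add_le w s]

theorem norm_pow_mul_norm_Gamma_div_le {w L : ℂ} {K k : ℝ} {n : ℕ} (hw : 0 < w.re)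
    (hK : ‖w‖ ≤ K * w.re) (hk : 0 < k) (hL : (n + 1) * k ≤ L.re) :
    ‖w‖ ^ (n + 1) * ‖Gamma (w / k)‖ ≤
      (K * k) ^ (n + 1) * (n ! / ‖Gamma (L / k)‖) * ‖Gamma ((w + L) / k)‖ := by
  have hz : 0 < (w / k).re := by rw [div_ofReal_re]; positivity
  have hc : (n + 1 : ℝ) ≤ (L / k).re := by rwa [div_ofReal_re, le_div_iff₀ hk]
  have hΓ := norm_Gamma_mul_re_pow_le hz hc
  rw [← add_div, div_ofReal_re] at hΓ
  have hK₀ : 0 ≤ K := le_of_mul_le_mul_right (by simpa using (norm_nonneg w).trans hK) hw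
  have hnorm : ‖w‖ ^ (n + 1) ≤ (K * k) ^ (n + 1) * (w.re / k) ^ (n + 1) := by
    rw [← mul_pow, mul_assoc, mul_div_cancel₀ _ hk.ne']
    gcongr
  calc ‖w‖ ^ (n + 1) * ‖Gamma (w / k)‖
      ≤ (K * k) ^ (n + 1) * (‖Gamma (w / k)‖ * (w.re / k) ^ (n + 1)) := by
        rw [mul_comm (‖Gamma _‖), ← mul_assoc]
        gcongr
    _ ≤ (K * k) ^ (n + 1) * (n ! / ‖Gamma (L / k)‖ * ‖Gamma ((w + L) / k)‖) := by
        gcongr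
    _ = _ := (mul_assoc _ _ _).symm

theorem norm_add_pow_div_norm_Gamma_le {w s L : ℂ} {ρ K k : ℝ} {p n : ℕ} (hρ : 0 < ρ)
    (hw : ρ ≤ w.re) (hK : ‖w‖ ≤ K * w.re) (hk : 0 < k) (hL : (n + 1) * k ≤ L.re) :
    ‖w + s‖ ^ (p + (n + 1)) / ‖Gamma ((w + L) / k)‖ ≤
      (1 + ‖s‖ / ρ) ^ (p + (n + 1)) * (K * k) ^ (n + 1) * (n ! / ‖Gamma (L / k)‖) *
        (‖w‖ ^ p / ‖Gamma (w / k)‖) := by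
  have hw₀ : 0 < w.re := hρ.trans_le hw
  have hL₀ : 0 < L.re := lt_of_lt_of_le (by positivity) hL
  have hD : 0 < ‖Gamma (w / k)‖ :=
    norm_pos_iff.2 (Gamma_ne_zero_of_re_pos (by rw [div_ofReal_re]; positivity))
  have hD' : 0 < ‖Gamma ((w + L) / k)‖ :=
    norm_pos_iff.2 (Gamma_ne_zero_of_re_pos (by rw [div_ofReal_re, add_re]; positivity))
  set A := 1 + ‖s‖ / ρ
  set B := (K * k) ^ (n + 1) * (n ! / ‖Gamma (L / k)‖)
  have key : ‖w + s‖ ^ (p + (n + 1)) * ‖Gamma (w / k)‖ ≤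
      A ^ (p + (n + 1)) * ‖w‖ ^ p * (B * ‖Gamma ((w + L) / k)‖) :=
    calc ‖w + s‖ ^ (p + (n + 1)) * ‖Gamma (w / k)‖
        ≤ (A * ‖w‖) ^ (p + (n + 1)) * ‖Gamma (w / k)‖ := by
          gcongr
          exact norm_add_le_mul_norm hρ (hw.trans (re_le_norm w))
      _ = A ^ (p + (n + 1)) * ‖w‖ ^ p * (‖w‖ ^ (n + 1) * ‖Gamma (w / k)‖) := by
          rw [mul_pow, pow_add ‖w‖]; ring
      _ ≤ A ^ (p + (n + 1)) * ‖w‖ ^ p * (B * ‖Gamma ((w + L) / k)‖) :=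
          mul_le_mul_of_nonneg_left (norm_pow_mul_norm_Gamma_div_le hw₀ hK hk hL) (by positivity)
  rw [div_le_iff₀ hD', mul_div_assoc', div_mul_eq_mul_div, le_div_iff₀ hD]
  linarith

theorem hasSum_shift {α M : Type*} [AddCommMonoid α] [PartialOrder α] [CanonicallyOrderedAdd α]
    [Sub α] [OrderedSub α] [AddLeftReflectLE α] [DecidableLE α] [AddCommMonoid M]
    [TopologicalSpace M] {f : α → M} {a : M} (l : α) (hf : HasSum f a) :
    HasSum (fun m => if l ≤ m then f (m - l) else 0) a := by
  have hinj : Function.Injective (· + l) := fun u v huv => by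
    simpa using congrArg (· - l) huv
  refine (hinj.hasSum_iff fun m hm => ?_).1 ?_
  · rw [if_neg]
    rintro hlm
    exact hm ⟨m - l, tsub_add_cancel_of_le hlm⟩
  · simpa [Function.comp_def] using hf

theorem summable_and_tsum_le_of_le_shift {α : Type*} [AddCommMonoid α] [PartialOrder α]
    [CanonicallyOrderedAdd α] [Sub α] [OrderedSub α] [AddLeftReflectLE α] [DecidableLE α]
    {f g : α → ℝ} (l : α) (hg : ∀ m, 0 ≤ g m) (hf : Summable f)
    (hgf : ∀ m, g m ≤ if l ≤ m then f (m - l) else 0) :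
    Summable g ∧ ∑' m, g m ≤ ∑' m, f m := by
  have hF := hasSum_shift l hf.hasSum
  have hgs : Summable g := .of_nonneg_of_le hg hgf hF.summable
  exact ⟨hgs, hasSum_le hgf hgs.hasSum hF⟩

section LatticePoint

variable {r₁ r₂ : ℂ}

def latticePoint (r₁ r₂ : ℂ) (m : ℕ × ℕ) : ℂ := m.1 * r₁ + m.2 * r₂

theorem latticePoint_add (m l : ℕ × ℕ) :
    latticePoint r₁ r₂ (m + l) = latticePoint r₁ r₂ m + latticePoint r₁ r₂ l := by
  simp only [latticePoint, Prod.fst_add, Prod.snd_add, Nat.cast_add]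
  ring

theorem re_latticePoint (m : ℕ × ℕ) : (latticePoint r₁ r₂ m).re = m.1 * r₁.re + m.2 * r₂.re := by
  simp [latticePoint]

theorem min_re_le_re_latticePoint (h₁ : 0 < r₁.re) (h₂ : 0 < r₂.re) {m : ℕ × ℕ} (hm : m ≠ 0) :
    min r₁.re r₂.re ≤ (latticePoint r₁ r₂ m).re := by
  rw [re_latticePoint]
  obtain ⟨m₁, m₂⟩ := m
  rcases Nat.eq_zero_or_pos m₁ with rfl | hm₁
  · have hm₂ : 1 ≤ (m₂ : ℝ) := by simpa [Nat.one_le_iff_ne_zero] using hm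
    nlinarith [min_le_right r₁.re r₂.re]
  · have : 1 ≤ (m₁ : ℝ) := by exact_mod_cast hm₁
    nlinarith [min_le_left r₁.re r₂.re, (Nat.cast_nonneg m₂ : (0:ℝ) ≤ m₂)]

theorem norm_latticePoint_le (h₁ : 0 < r₁.re) (h₂ : 0 < r₂.re) (m : ℕ × ℕ) :
    ‖latticePoint r₁ r₂ m‖ ≤
      max (‖r₁‖ / r₁.re) (‖r₂‖ / r₂.re) * (latticePoint r₁ r₂ m).re := by
  set K := max (‖r₁‖ / r₁.re) (‖r₂‖ / r₂.re)
  have hr₁ : ‖r₁‖ ≤ K * r₁.re := (div_le_iff₀ h₁).1 (le_max_left _ _)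
  have hr₂ : ‖r₂‖ ≤ K * r₂.re := (div_le_iff₀ h₂).1 (le_max_right _ _)
  calc ‖latticePoint r₁ r₂ m‖ ≤ m.1 * ‖r₁‖ + m.2 * ‖r₂‖ := by
        simpa [latticePoint] using norm_add_le ((m.1 : ℂ) * r₁) (m.2 * r₂)
    _ ≤ m.1 * (K * r₁.re) + m.2 * (K * r₂.re) := by gcongr
    _ = K * (latticePoint r₁ r₂ m).re := by rw [re_latticePoint]; ring

theorem norm_shifted_coeff_div_le (h₁ : 0 < r₁.re) (h₂ : 0 < r₂.re) {k : ℝ} (hk : 0 < k)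
    {p n : ℕ} {s : ℂ} {l : ℕ × ℕ} (hL : ((n : ℝ) + 1) * k ≤ (latticePoint r₁ r₂ l).re)
    {a : ℕ × ℕ → ℂ} (ha₀ : a 0 = 0) (m : ℕ × ℕ) :
    ‖(latticePoint r₁ r₂ m + s) ^ (p + (n + 1)) * a m‖ /
        ‖Gamma (latticePoint r₁ r₂ (m + l) / k)‖ ≤
      (1 + ‖s‖ / min r₁.re r₂.re) ^ (p + (n + 1)) *
          (max (‖r₁‖ / r₁.re) (‖r₂‖ / r₂.re) * k) ^ (n + 1) *
          (n ! / ‖Gamma (latticePoint r₁ r₂ l / k)‖) *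
        (‖latticePoint r₁ r₂ m‖ ^ p * ‖a m‖ / ‖Gamma (latticePoint r₁ r₂ m / k)‖) := by
  rcases eq_or_ne m 0 with rfl | hm
  · simp [ha₀]
  have hw := norm_add_pow_div_norm_Gamma_le (s := s) (p := p) (lt_min h₁ h₂)
    (min_re_le_re_latticePoint h₁ h₂ hm) (norm_latticePoint_le h₁ h₂ m) hk hL
  rw [latticePoint_add, norm_mul, norm_pow, mul_div_right_comm]
  refine (mul_le_mul_of_nonneg_right hw (norm_nonneg _)).trans_eq ?_
  ring

end LatticePoint

theorem stmt9_general (r₁ r₂ : ℂ) (h₁ : 0 < r₁.re) (h₂ : 0 < r₂.re)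
    (k : ℝ) (hk : 0 < k)
    (p i : ℕ) (hip : p < i) (sμ : ℂ)
    (l₁ l₂ : ℕ) (hl : ((i : ℝ) - p) * k ≤ ((l₁ : ℂ) * r₁ + (l₂ : ℂ) * r₂).re) :
    ∃ C > (0:ℝ), ∀ a : ℕ × ℕ → ℂ, a 0 = 0 →
      (Summable fun m : ℕ × ℕ =>
        ‖(m.1:ℂ)*r₁ + (m.2:ℂ)*r₂‖ ^ p * ‖a m‖ /
          ‖Complex.Gamma (((m.1:ℂ)*r₁ + (m.2:ℂ)*r₂) / k)‖) →
      -- the image z₁^{l₁} z₂^{l₂} (Δ + sμ)^i η lies in H⁰ …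
      (Summable fun m : ℕ × ℕ =>
        ‖if l₁ ≤ m.1 ∧ l₂ ≤ m.2 then
            ((((m.1 - l₁ : ℕ):ℂ)*r₁ + ((m.2 - l₂ : ℕ):ℂ)*r₂) + sμ) ^ i *
              a (m.1 - l₁, m.2 - l₂)
          else 0‖ /
          ‖Complex.Gamma (((m.1:ℂ)*r₁ + (m.2:ℂ)*r₂) / k)‖) ∧
      -- … and the operator is bounded from Hᵖ to H⁰
      (∑' m : ℕ × ℕ,
        ‖if l₁ ≤ m.1 ∧ l₂ ≤ m.2 then
            ((((m.1 - l₁ : ℕ):ℂ)*r₁ + ((m.2 - l₂ : ℕ):ℂ)*r₂) + sμ) ^ i *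
              a (m.1 - l₁, m.2 - l₂)
          else 0‖ /
          ‖Complex.Gamma (((m.1:ℂ)*r₁ + (m.2:ℂ)*r₂) / k)‖)
      ≤ C * ∑' m : ℕ × ℕ,
          ‖(m.1:ℂ)*r₁ + (m.2:ℂ)*r₂‖ ^ p * ‖a m‖ /
            ‖Complex.Gamma (((m.1:ℂ)*r₁ + (m.2:ℂ)*r₂) / k)‖ := by
  obtain ⟨n, rfl⟩ : ∃ n, i = p + (n + 1) := ⟨i - p - 1, by omega⟩
  set l : ℕ × ℕ := (l₁, l₂)
  set L := latticePoint r₁ r₂ l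
  have hL : ((n : ℝ) + 1) * k ≤ L.re := by simpa [L, l, re_latticePoint] using hl
  have hL₀ : 0 < L.re := lt_of_lt_of_le (by positivity) hL
  set ρ := min r₁.re r₂.re
  set K := max (‖r₁‖ / r₁.re) (‖r₂‖ / r₂.re)
  have hρ : 0 < ρ := lt_min h₁ h₂
  have hK : 0 < K := lt_max_of_lt_left (div_pos (norm_pos_iff.2 fun h => by simp [h] at h₁) h₁)
  have hΓL : 0 < ‖Gamma (L / k)‖ :=
    norm_pos_iff.2 (Gamma_ne_zero_of_re_pos (by rw [div_ofReal_re]; positivity))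
  set C := (1 + ‖sμ‖ / ρ) ^ (p + (n + 1)) * (K * k) ^ (n + 1) * (n ! / ‖Gamma (L / k)‖)
  refine ⟨C, by positivity, fun a ha₀ hF => ?_⟩
  have hbound : ∀ m : ℕ × ℕ,
      ‖if l₁ ≤ m.1 ∧ l₂ ≤ m.2 then
          (latticePoint r₁ r₂ (m.1 - l₁, m.2 - l₂) + sμ) ^ (p + (n + 1)) * a (m.1 - l₁, m.2 - l₂)
        else 0‖ / ‖Gamma (latticePoint r₁ r₂ m / k)‖ ≤
      if l ≤ m then
        C * (‖latticePoint r₁ r₂ (m - l)‖ ^ p * ‖a (m - l)‖ /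
          ‖Gamma (latticePoint r₁ r₂ (m - l) / k)‖)
      else 0 := by
    intro m
    by_cases hlm : l ≤ m
    · obtain ⟨m', rfl⟩ : ∃ m', m = m' + l := ⟨m - l, (tsub_add_cancel_of_le hlm).symm⟩
      have hm : (m' + l).1 - l₁ = m'.1 ∧ (m' + l).2 - l₂ = m'.2 := by simp [l]
      rw [if_pos hlm, if_pos (Prod.le_def.1 hlm), hm.1, hm.2, Prod.mk.eta, add_tsub_cancel_right]
      exact norm_shifted_coeff_div_le h₁ h₂ hk hL ha₀ m'
    · rw [if_neg hlm, if_neg (mt Prod.le_def.2 hlm)]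
      simp
  exact (summable_and_tsum_le_of_le_shift l (fun m => by positivity) (hF.mul_left C)
    hbound).imp_right (·.trans_eq tsum_mul_left)

theorem stmt9 (r₁ r₂ : ℂ) (h₁ : 0 < r₁.re) (h₂ : 0 < r₂.re)
    (hind : LinearIndependent ℤ ![r₁, r₂]) (k : ℝ) (hk : 0 < k)
    (p i : ℕ) (hip : p < i) (sμ : ℂ) (hsμ : 0 ≤ sμ.re)
    (l₁ l₂ : ℕ) (hl : ((i : ℝ) - p) * k ≤ ((l₁ : ℂ) * r₁ + (l₂ : ℂ) * r₂).re) :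
    ∃ C > (0:ℝ), ∀ a : ℕ × ℕ → ℂ, a 0 = 0 →
      (Summable fun m : ℕ × ℕ =>
        ‖(m.1:ℂ)*r₁ + (m.2:ℂ)*r₂‖ ^ p * ‖a m‖ /
          ‖Complex.Gamma (((m.1:ℂ)*r₁ + (m.2:ℂ)*r₂) / k)‖) →
      -- the image z₁^{l₁} z₂^{l₂} (Δ + sμ)^i η lies in H⁰ …
      (Summable fun m : ℕ × ℕ =>
        ‖if l₁ ≤ m.1 ∧ l₂ ≤ m.2 then
            ((((m.1 - l₁ : ℕ):ℂ)*r₁ + ((m.2 - l₂ : ℕ):ℂ)*r₂) + sμ) ^ i *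
              a (m.1 - l₁, m.2 - l₂)
          else 0‖ /
          ‖Complex.Gamma (((m.1:ℂ)*r₁ + (m.2:ℂ)*r₂) / k)‖) ∧
      -- … and the operator is bounded from Hᵖ to H⁰
      (∑' m : ℕ × ℕ,
        ‖if l₁ ≤ m.1 ∧ l₂ ≤ m.2 then
            ((((m.1 - l₁ : ℕ):ℂ)*r₁ + ((m.2 - l₂ : ℕ):ℂ)*r₂) + sμ) ^ i *
              a (m.1 - l₁, m.2 - l₂)
          else 0‖ /
          ‖Complex.Gamma (((m.1:ℂ)*r₁ + (m.2:ℂ)*r₂) / k)‖)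
      ≤ C * ∑' m : ℕ × ℕ,
          ‖(m.1:ℂ)*r₁ + (m.2:ℂ)*r₂‖ ^ p * ‖a m‖ /
            ‖Complex.Gamma (((m.1:ℂ)*r₁ + (m.2:ℂ)*r₂) / k)‖ :=
  stmt9_general r₁ r₂ h₁ h₂ k hk p i hip sμ l₁ l₂ hl
end

section
/- Let $k > 0$ and let $\gamma'$ be a complex number with $\mathrm{Re}\,\gamma' \geq (i-p)k$ for integers $i > p \geq 0$. Then the sequence (net) $(\gamma - \gamma' + s_\mu)^{i-p}\, \Gamma((\gamma - \gamma')/k)/\Gamma(\gamma/k)$ is bounded uniformly over all $\gamma$ in a set of complex numbers with $\mathrm{Re}(\gamma - \gamma') \geq \epsilon > 0$, for any fixed $s_\mu \in \mathbb{C}$: i.e., there exists $C > 0$ such that $|(\gamma - \gamma' + s_\mu)^{i-p}|\cdot|\Gamma((\gamma-\gamma')/k)/\Gamma(\gamma/k)| \leq C$ for all such $\gamma$. -/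
/-!
Put `n = i - p`, `z = (γ - γ') / k` and `a = γ' / k - n`, so that `γ / k = z + n + a` and
`Re a ≥ 0`. The functional equation gives `Γ(z) = Γ(z + n) / (z (z + 1) ⋯ (z + n - 1))`, and since
`Re z ≥ ε / k` every factor `z + j` dominates `γ - γ' + sμ = k z + sμ` up to a constant; this
absorbs the power. What remains is a bound for `Γ(ζ) / Γ(ζ + a)` on `Re ζ ≥ 1`, valid also when
`Re a = 0`. The ratio of the Gauss approximants is `m ^ (-a) ∏_{j ≤ m} (1 + a / (ζ + j))`, and
`|1 + v| ≤ exp (Re v + |v|² / 2)` turns it into a harmonic sum (cancelled by `m ^ (-a)` up to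
`log 2`), a sum of `(j + 1)⁻²`, and `∑ |Im ζ| / |ζ + j|²`, which telescopes against `arctan` to at
most `π / 2`.
-/

open Finset Real

theorem Real.sub_div_one_add_sq_le_arctan_sub {b c : ℝ} (hc : 0 ≤ c) (hcb : c ≤ b) :
    (b - c) / (1 + b ^ 2) ≤ arctan b - arctan c := by
  rw [div_eq_inv_mul, ← one_div]
  refine (convex_Icc c b).mul_sub_le_image_sub_of_le_deriv continuous_arctan.continuousOn
    differentiable_arctan.differentiableOn (fun t ht ↦ ?_) c ⟨le_rfl, hcb⟩ b ⟨hcb, le_rfl⟩ hcb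
  rw [interior_Icc] at ht
  rw [deriv_arctan, one_div_le_one_div (by positivity) (by positivity)]
  nlinarith [ht.1, ht.2]

theorem sum_abs_div_sq_add_sq_le_pi_div_two {x : ℝ} (hx : 1 ≤ x) (y : ℝ) (m : ℕ) :
    ∑ j ∈ range m, |y| / ((x + j) ^ 2 + y ^ 2) ≤ π / 2 := by
  rcases eq_or_ne y 0 with rfl | hy
  · simpa using pi_div_two_pos.le
  have hy' : 0 < |y| := abs_pos.mpr hy
  set f : ℕ → ℝ := fun j ↦ arctan ((x + j - 1) / |y|)
  have hterm : ∀ j : ℕ, |y| / ((x + j) ^ 2 + y ^ 2) ≤ f (j + 1) - f j := by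
    intro j
    have h := sub_div_one_add_sq_le_arctan_sub (c := (x + j - 1) / |y|) (b := (x + j) / |y|)
      (div_nonneg (by linarith [j.cast_nonneg (α := ℝ)]) hy'.le) (by gcongr; linarith)
    convert h using 1
    · rw [← sq_abs y]; field_simp; ring
    · simp only [f]; push_cast; ring_nf
  calc ∑ j ∈ range m, |y| / ((x + j) ^ 2 + y ^ 2) ≤ ∑ j ∈ range m, (f (j + 1) - f j) :=
        sum_le_sum fun j _ ↦ hterm j
    _ = f m - f 0 := sum_range_sub f m
    _ ≤ π / 2 := by
        have h0 : 0 ≤ f 0 := arctan_nonneg.mpr (div_nonneg (by simpa using hx) hy'.le)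
        linarith [arctan_lt_pi_div_two ((x + m - 1) / |y|)]

theorem sum_range_inv_add_one_le_one_add_log (m : ℕ) :
    ∑ j ∈ range m, ((j : ℝ) + 1)⁻¹ ≤ 1 + log m := by
  simpa [harmonic] using harmonic_le_one_add_log m

theorem sum_range_inv_add_one_sq_le_two (m : ℕ) : ∑ j ∈ range m, (((j : ℝ) + 1) ^ 2)⁻¹ ≤ 2 := by
  have h := sum_Ioo_inv_sq_le (α := ℝ) 0 (m + 1)
  rw [← Ico_add_one_left_eq_Ioo, ← sum_Ico_add' (c := 1), ← range_eq_Ico] at h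
  simpa using h

namespace Complex

theorem norm_one_add_le_exp (v : ℂ) : ‖1 + v‖ ≤ Real.exp (v.re + ‖v‖ ^ 2 / 2) := by
  have hsq : ‖1 + v‖ ^ 2 = 1 + 2 * v.re + ‖v‖ ^ 2 := by
    rw [Complex.sq_norm, Complex.sq_norm, normSq_add]
    simp only [normSq_one, one_mul, conj_re]
    ring
  refine pow_le_pow_iff_left₀ (norm_nonneg _) (Real.exp_pos _).le two_ne_zero |>.mp ?_
  rw [hsq, ← Real.exp_nat_mul, Nat.cast_ofNat, mul_add, mul_div_cancel₀ _ two_ne_zero]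
  linarith [Real.add_one_le_exp (2 * v.re + ‖v‖ ^ 2)]

theorem add_natCast_ne_zero {z : ℂ} (hz : 0 < z.re) (j : ℕ) : z + j ≠ 0 := fun h ↦ by
  have := congrArg re h
  simp only [add_re, natCast_re, zero_re] at this
  linarith [j.cast_nonneg (α := ℝ)]

theorem GammaSeq_div_GammaSeq_add (ζ a : ℂ) {m : ℕ} (hm : m ≠ 0) (hζ : ∀ j : ℕ, ζ + j ≠ 0) :
    GammaSeq ζ m / GammaSeq (ζ + a) m =
      (m : ℂ) ^ (-a) * ∏ j ∈ range (m + 1), (1 + a / (ζ + j)) := by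
  have hmC : (m : ℂ) ≠ 0 := Nat.cast_ne_zero.mpr hm
  have hfac : ∏ j ∈ range (m + 1), (1 + a / (ζ + j)) =
      (∏ j ∈ range (m + 1), (ζ + a + j)) / ∏ j ∈ range (m + 1), (ζ + j) := by
    rw [← prod_div_distrib]
    refine prod_congr rfl fun j _ ↦ ?_
    field_simp [hζ j]
    ring
  have hfact : (m.factorial : ℂ) ≠ 0 := Nat.cast_ne_zero.mpr m.factorial_ne_zero
  rw [hfac, GammaSeq, GammaSeq, cpow_add _ _ hmC, cpow_neg]
  have hmζ : (m : ℂ) ^ ζ ≠ 0 := cpow_ne_zero_iff.mpr (Or.inl hmC)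
  field_simp

theorem norm_one_add_div_le_exp {ζ a : ℂ} (hζ : 1 ≤ ζ.re) (ha : 0 ≤ a.re) (j : ℕ) :
    ‖1 + a / (ζ + j)‖ ≤ Real.exp (a.re / (j + 1) + |a.im| * (|ζ.im| / ((ζ.re + j) ^ 2 + ζ.im ^ 2))
      + ‖a‖ ^ 2 / (2 * (j + 1) ^ 2)) := by
  set x := ζ.re + j
  set y := ζ.im
  have hjx : (j : ℝ) + 1 ≤ x := by simp only [x]; linarith
  have hj : 0 < (j : ℝ) + 1 := by positivity
  have hN : normSq (ζ + j) = x ^ 2 + y ^ 2 := by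
    simp only [normSq_apply, add_re, natCast_re, add_im, natCast_im, add_zero, x, y]
    ring
  have hNpos : 0 < x ^ 2 + y ^ 2 := by nlinarith
  refine (norm_one_add_le_exp _).trans (Real.exp_le_exp.mpr ?_)
  have hre : (a / (ζ + j)).re = a.re * x / (x ^ 2 + y ^ 2) + a.im * y / (x ^ 2 + y ^ 2) := by
    rw [div_re, hN]; simp [x, y]
  have hnorm : ‖a / (ζ + j)‖ ^ 2 = ‖a‖ ^ 2 / (x ^ 2 + y ^ 2) := by
    rw [norm_div, div_pow, Complex.sq_norm (ζ + j), hN]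
  have h₁ : a.re * x / (x ^ 2 + y ^ 2) ≤ a.re / (j + 1) := by
    rw [div_le_div_iff₀ hNpos hj]
    have hx : 0 ≤ x := by linarith
    nlinarith [mul_nonneg ha (sq_nonneg y), mul_le_mul_of_nonneg_left hjx (mul_nonneg ha hx)]
  have h₂ : a.im * y / (x ^ 2 + y ^ 2) ≤ |a.im| * (|y| / (x ^ 2 + y ^ 2)) := by
    rw [← mul_div_assoc, ← abs_mul]
    exact div_le_div_of_nonneg_right (le_abs_self _) hNpos.le
  have h₃ : ‖a‖ ^ 2 / (x ^ 2 + y ^ 2) / 2 ≤ ‖a‖ ^ 2 / (2 * (j + 1) ^ 2) := by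
    rw [div_div, mul_comm]
    gcongr
    nlinarith
  rw [hre, hnorm]
  linarith

theorem norm_GammaSeq_div_GammaSeq_add_le {ζ a : ℂ} (hζ : 1 ≤ ζ.re) (ha : 0 ≤ a.re) {m : ℕ}
    (hm : m ≠ 0) : ‖GammaSeq ζ m / GammaSeq (ζ + a) m‖ ≤
      Real.exp (a.re * (1 + Real.log 2) + |a.im| * (π / 2) + ‖a‖ ^ 2) := by
  have hζj := add_natCast_ne_zero (z := ζ) (by linarith)
  have hm1 : (1 : ℝ) ≤ m := Nat.one_le_cast.mpr (Nat.one_le_iff_ne_zero.mpr hm)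
  have hsum : ∑ j ∈ range (m + 1), (a.re / (j + 1)
      + |a.im| * (|ζ.im| / ((ζ.re + j) ^ 2 + ζ.im ^ 2)) + ‖a‖ ^ 2 / (2 * (j + 1) ^ 2))
      ≤ a.re * (1 + Real.log ((m : ℝ) + 1)) + |a.im| * (π / 2) + ‖a‖ ^ 2 := by
    calc _ = a.re * ∑ j ∈ range (m + 1), ((j : ℝ) + 1)⁻¹
          + |a.im| * ∑ j ∈ range (m + 1), |ζ.im| / ((ζ.re + j) ^ 2 + ζ.im ^ 2)
          + ‖a‖ ^ 2 / 2 * ∑ j ∈ range (m + 1), (((j : ℝ) + 1) ^ 2)⁻¹ := by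
          rw [mul_sum, mul_sum, mul_sum, ← sum_add_distrib, ← sum_add_distrib]
          exact sum_congr rfl fun j _ ↦ by rw [div_eq_mul_inv (‖a‖ ^ 2), mul_inv]; ring
      _ ≤ a.re * (1 + Real.log ((m + 1 : ℕ) : ℝ)) + |a.im| * (π / 2) + ‖a‖ ^ 2 / 2 * 2 := by
          gcongr
          · exact sum_range_inv_add_one_le_one_add_log (m + 1)
          · exact sum_abs_div_sq_add_sq_le_pi_div_two hζ ζ.im (m + 1)
          · exact sum_range_inv_add_one_sq_le_two (m + 1)
      _ = _ := by push_cast; ring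
  have hlog : Real.log ((m : ℝ) + 1) ≤ Real.log 2 + Real.log (m : ℝ) := by
    rw [← Real.log_mul two_ne_zero (zero_lt_one.trans_le hm1).ne']
    exact log_le_log (by positivity) (by linarith)
  rw [GammaSeq_div_GammaSeq_add ζ a hm hζj, norm_mul, norm_prod,
    norm_natCast_cpow_of_pos (Nat.pos_of_ne_zero hm), neg_re, rpow_def_of_pos (by positivity)]
  calc Real.exp (Real.log (m : ℝ) * -a.re) * ∏ j ∈ range (m + 1), ‖1 + a / (ζ + j)‖
      ≤ Real.exp (Real.log (m : ℝ) * -a.re) * Real.exp (∑ j ∈ range (m + 1), (a.re / (j + 1)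
          + |a.im| * (|ζ.im| / ((ζ.re + j) ^ 2 + ζ.im ^ 2)) + ‖a‖ ^ 2 / (2 * (j + 1) ^ 2))) := by
        rw [Real.exp_sum]
        gcongr with j
        exact norm_one_add_div_le_exp hζ ha j
    _ ≤ _ := by
        rw [← Real.exp_add, Real.exp_le_exp]
        nlinarith [mul_le_mul_of_nonneg_left hlog ha]

theorem norm_Gamma_div_Gamma_add_le {ζ a : ℂ} (hζ : 1 ≤ ζ.re) (ha : 0 ≤ a.re) :
    ‖Gamma ζ / Gamma (ζ + a)‖ ≤
      Real.exp (a.re * (1 + Real.log 2) + |a.im| * (π / 2) + ‖a‖ ^ 2) := by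
  have hΓ : Gamma (ζ + a) ≠ 0 := Gamma_ne_zero_of_re_pos (by rw [add_re]; linarith)
  refine le_of_tendsto ((GammaSeq_tendsto_Gamma ζ).div (GammaSeq_tendsto_Gamma _) hΓ).norm ?_
  filter_upwards [Filter.eventually_ne_atTop 0] with m hm
  exact norm_GammaSeq_div_GammaSeq_add_le hζ ha hm

theorem Gamma_add_nat_eq_prod_mul {z : ℂ} (hz : ∀ j : ℕ, z + j ≠ 0) (n : ℕ) :
    Gamma (z + n) = (∏ j ∈ range n, (z + j)) * Gamma z := by
  induction n with
  | zero => simp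
  | succ n ih =>
    rw [Nat.cast_succ, ← add_assoc, Gamma_add_one _ (hz n), ih, prod_range_succ]
    ring

theorem norm_le_norm_add_natCast {z : ℂ} (hz : 0 ≤ z.re) (j : ℕ) : ‖z‖ ≤ ‖z + j‖ := by
  refine pow_le_pow_iff_left₀ (norm_nonneg _) (norm_nonneg _) two_ne_zero |>.mp ?_
  rw [Complex.sq_norm, Complex.sq_norm, normSq_apply, normSq_apply]
  simp only [add_re, natCast_re, add_im, natCast_im, add_zero]
  nlinarith [j.cast_nonneg (α := ℝ)]

theorem norm_pow_div_prod_add_natCast_le {z : ℂ} {δ : ℝ} (hδ : 0 < δ) (hz : δ ≤ z.re)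
    {k : ℝ} (hk : 0 ≤ k) (s : ℂ) (n : ℕ) :
    ‖(k * z + s) ^ n / ∏ j ∈ range n, (z + j)‖ ≤ (k + ‖s‖ / δ) ^ n := by
  have hδj : ∀ j : ℕ, δ ≤ ‖z + j‖ := fun j ↦ by
    refine le_trans ?_ (re_le_norm _)
    simp only [add_re, natCast_re]
    linarith [j.cast_nonneg (α := ℝ)]
  have hfactor : ∀ j : ℕ, ‖k * z + s‖ ≤ (k + ‖s‖ / δ) * ‖z + j‖ := fun j ↦ by
    have hs : ‖s‖ ≤ ‖s‖ / δ * ‖z + j‖ := by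
      rw [div_mul_eq_mul_div, le_div_iff₀ hδ]
      exact mul_le_mul_of_nonneg_left (hδj j) (norm_nonneg s)
    calc ‖k * z + s‖ ≤ k * ‖z‖ + ‖s‖ := by
          grw [norm_add_le, norm_mul, norm_real, Real.norm_of_nonneg hk]
      _ ≤ k * ‖z + j‖ + ‖s‖ / δ * ‖z + j‖ := by
          gcongr
          exact norm_le_norm_add_natCast (hδ.le.trans hz) j
      _ = (k + ‖s‖ / δ) * ‖z + j‖ := by ring
  rw [norm_div, norm_pow, norm_prod, div_le_iff₀ (prod_pos fun j _ ↦ hδ.trans_le (hδj j))]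
  calc ‖k * z + s‖ ^ n = ∏ _j ∈ range n, ‖k * z + s‖ := by rw [prod_const, card_range]
    _ ≤ ∏ j ∈ range n, (k + ‖s‖ / δ) * ‖z + j‖ :=
        prod_le_prod (fun _ _ ↦ norm_nonneg _) fun j _ ↦ hfactor j
    _ = (k + ‖s‖ / δ) ^ n * ∏ j ∈ range n, ‖z + j‖ := by
        rw [prod_mul_distrib, prod_const, card_range]

end Complex

open Complex

theorem stmt19 (k : ℝ) (hk : 0 < k) (p i : ℕ) (hip : p < i)
    (γ' : ℂ) (hγ' : ((i : ℝ) - p) * k ≤ γ'.re)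
    (sμ : ℂ) (ε : ℝ) (hε : 0 < ε) :
    ∃ C > (0:ℝ), ∀ γ : ℂ, ε ≤ (γ - γ').re →
      ‖(γ - γ' + sμ) ^ (i - p)‖ *
        ‖Complex.Gamma ((γ - γ') / k) / Complex.Gamma (γ / k)‖ ≤ C := by
  set n := i - p
  set a : ℂ := γ' / k - n
  have ha : 0 ≤ a.re := by
    have hn : (n : ℝ) = i - p := by simp only [n, Nat.cast_sub hip.le]
    simp only [a, sub_re, div_ofReal_re, natCast_re, sub_nonneg, le_div_iff₀ hk, hn, hγ']
  have hδ : 0 < ε / k := div_pos hε hk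
  have hkC : (k : ℂ) ≠ 0 := ofReal_ne_zero.mpr hk.ne'
  refine ⟨(k + ‖sμ‖ / (ε / k)) ^ n *
    Real.exp (a.re * (1 + Real.log 2) + |a.im| * (π / 2) + ‖a‖ ^ 2), by positivity, fun γ hγ ↦ ?_⟩
  set z := (γ - γ') / k
  have hz : ε / k ≤ z.re := by
    simpa only [z, div_ofReal_re] using div_le_div_of_nonneg_right hγ hk.le
  have hzn : 1 ≤ (z + n).re := by
    simp only [add_re, natCast_re]
    linarith [(Nat.one_le_cast (α := ℝ)).mpr (Nat.sub_pos_of_lt hip)]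
  have hzj := add_natCast_ne_zero (hδ.trans_le hz)
  have hΓz : Gamma z = Gamma (z + n) / ∏ j ∈ range n, (z + j) :=
    eq_div_of_mul_eq (prod_ne_zero_iff.mpr fun j _ ↦ hzj j)
      ((mul_comm _ _).trans (Gamma_add_nat_eq_prod_mul hzj n).symm)
  have hγz : γ - γ' = k * z := by simp only [z]; field_simp
  have hγa : γ / k = z + n + a := by simp only [z, a]; field_simp; ring
  rw [hγz, hγa]
  calc ‖(k * z + sμ) ^ n‖ * ‖Gamma z / Gamma (z + n + a)‖
      = ‖(k * z + sμ) ^ n / ∏ j ∈ range n, (z + j)‖ * ‖Gamma (z + n) / Gamma (z + n + a)‖ := by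
        rw [hΓz, ← norm_mul, ← norm_mul]
        ring_nf
    _ ≤ _ := mul_le_mul (norm_pow_div_prod_add_natCast_le hδ hz hk.le sμ n)
        (norm_Gamma_div_Gamma_add_le hzn ha) (norm_nonneg _) (by positivity)
end
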